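/- Fix a real number p > 1 and ε ∈ (0, 2/3). For θ ∈ (0,1), and for each of the three quartet topologies t ∈ {12|34, 13|24, 14|23}, let D_t^θ be the CFN quartet distribution on {α,β}^4 for topology t with edge parameter θ^p on each of the four terminal edges and edge parameter θ on the interior edge. Suppose that for some positive integer k, some θ ∈ (0,1), and some function (tree-reconstruction method) M : ({α,β}^4)^k → {12|34, 13|24, 14|23}, for every topology t the probability that M outputs t when applied to k i.i.d. samples from D_t^θ is at least 1 − ε. Then k ≥ (1/2)·(1 − (3/2)ε)²·p². -/

import Mathlib

open scoped BigOperators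

/-- The three resolved topologies on four taxa. -/
inductive QuartetTopology : Type
  | t12_34 : QuartetTopology
  | t13_24 : QuartetTopology
  | t14_23 : QuartetTopology
deriving DecidableEq

/-- The CFN transition matrix with edge parameter `η`. -/
noncomputable def cfnM (η : ℝ) (a b : Bool) : ℝ :=
  if a = b then (1 + η) / 2 else (1 - η) / 2

/-- The CFN quartet distribution on `{α,β}^4` for topology `t`, with interior edge
parameter `ηint` and (common) terminal edge parameter `ηterm`. -/
noncomputable def cfnQuartet (t : QuartetTopology) (ηint ηterm : ℝ) (s : Fin 4 → Bool) : ℝ :=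
  match t with
  | .t12_34 => ∑ u : Bool, ∑ v : Bool,
      (1 / 2) * cfnM ηint u v * cfnM ηterm u (s 0) * cfnM ηterm u (s 1) *
        cfnM ηterm v (s 2) * cfnM ηterm v (s 3)
  | .t13_24 => ∑ u : Bool, ∑ v : Bool,
      (1 / 2) * cfnM ηint u v * cfnM ηterm u (s 0) * cfnM ηterm v (s 1) *
        cfnM ηterm u (s 2) * cfnM ηterm v (s 3)
  | .t14_23 => ∑ u : Bool, ∑ v : Bool,
      (1 / 2) * cfnM ηint u v * cfnM ηterm u (s 0) * cfnM ηterm v (s 1) *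
        cfnM ηterm v (s 2) * cfnM ηterm u (s 3)

/-!
Let `P` be the `12|34` distribution and `Qₜ` that of a wrong topology `t`. The method outputs
`12|34` with `Pᵏ`-probability at least `1 - ε`, and each wrong `t` with `Pᵏ`-probability at least
`1 - ε - ‖Pᵏ - Qₜᵏ‖_TV`; as these three probabilities sum to one, `1 - 3ε/2 ≤ ‖Pᵏ - Qₜᵏ‖_TV` for
some `t`. Le Cam bounds the total variation by `√(2(1 - B))` for the Bhattacharyya coefficient
`B`, which is multiplicative, so Bernoulli gives `1 - B(Pᵏ, Qₜᵏ) ≤ k (1 - B(P, Qₜ))`. Finally `P`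
and `Qₜ` differ by `η²(1 - θ)/4` on four site patterns only and `P ≥ (1 - η²)²/32`, so
`1 - B(P, Qₜ) ≤ 4η⁴(1 - θ)²/(1 - η²)²`, which is at most `1/p²` for `η = θ^p`.
-/

section Bhattacharyya

open Finset

variable {X : Type*} [Fintype X]

noncomputable def bhattacharyya (f g : X → ℝ) : ℝ := ∑ x, √(f x * g x)

variable {f g : X → ℝ}

lemma sub_eq_sqrt_sub_sqrt_mul_add {a b : ℝ} (ha : 0 ≤ a) (hb : 0 ≤ b) :
    a - b = (√a - √b) * (√a + √b) := by
  rw [mul_comm, ← sq_sub_sq, Real.sq_sqrt ha, Real.sq_sqrt hb]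

lemma bhattacharyya_nonneg : 0 ≤ bhattacharyya f g :=
  sum_nonneg fun _ _ => Real.sqrt_nonneg _

lemma sum_sq_sqrt_sub_sqrt (hf : f ∈ stdSimplex ℝ X) (hg : g ∈ stdSimplex ℝ X) :
    ∑ x, (√(f x) - √(g x)) ^ 2 = 2 - 2 * bhattacharyya f g := by
  have h x : (√(f x) - √(g x)) ^ 2 = f x + g x - 2 * √(f x * g x) := by
    rw [sub_sq, Real.sq_sqrt (hf.1 x), Real.sq_sqrt (hg.1 x), Real.sqrt_mul (hf.1 x)]
    ring
  simp only [h, sum_sub_distrib, sum_add_distrib, hf.2, hg.2, ← mul_sum, bhattacharyya]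
  norm_num

lemma sum_sq_sqrt_add_sqrt (hf : f ∈ stdSimplex ℝ X) (hg : g ∈ stdSimplex ℝ X) :
    ∑ x, (√(f x) + √(g x)) ^ 2 = 2 + 2 * bhattacharyya f g := by
  have h x : (√(f x) + √(g x)) ^ 2 = f x + g x + 2 * √(f x * g x) := by
    rw [add_sq, Real.sq_sqrt (hf.1 x), Real.sq_sqrt (hg.1 x), Real.sqrt_mul (hf.1 x)]
    ring
  simp only [h, sum_add_distrib, hf.2, hg.2, ← mul_sum, bhattacharyya]
  norm_num

lemma bhattacharyya_le_one (hf : f ∈ stdSimplex ℝ X) (hg : g ∈ stdSimplex ℝ X) :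
    bhattacharyya f g ≤ 1 := by
  have := sum_sq_sqrt_sub_sqrt hf hg
  have : 0 ≤ ∑ x, (√(f x) - √(g x)) ^ 2 := sum_nonneg fun _ _ => sq_nonneg _
  linarith

/-- Le Cam's inequality. -/
lemma sq_sum_abs_sub_le (hf : f ∈ stdSimplex ℝ X) (hg : g ∈ stdSimplex ℝ X) :
    (∑ x, |g x - f x|) ^ 2 ≤ 4 * (1 - bhattacharyya f g ^ 2) := by
  have h x : |g x - f x| = |√(f x) - √(g x)| * (√(f x) + √(g x)) := by
    rw [abs_sub_comm, sub_eq_sqrt_sub_sqrt_mul_add (hf.1 x) (hg.1 x), abs_mul,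
      abs_of_nonneg (by positivity : 0 ≤ √(f x) + √(g x))]
  calc (∑ x, |g x - f x|) ^ 2
      ≤ (∑ x, |√(f x) - √(g x)| ^ 2) * ∑ x, (√(f x) + √(g x)) ^ 2 := by
        simp only [h]; exact sum_mul_sq_le_sq_mul_sq _ _ _
    _ = (2 - 2 * bhattacharyya f g) * (2 + 2 * bhattacharyya f g) := by
        simp only [sq_abs, sum_sq_sqrt_sub_sqrt hf hg, sum_sq_sqrt_add_sqrt hf hg]
    _ = 4 * (1 - bhattacharyya f g ^ 2) := by ring

lemma sum_ite_sub_le_half_sum_abs (h : ∑ x, f x = ∑ x, g x) (A : X → Prop) [DecidablePred A] :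
    ∑ x, (if A x then g x - f x else 0) ≤ (∑ x, |g x - f x|) / 2 := by
  have hpt x : (if A x then g x - f x else 0) ≤ (g x - f x + |g x - f x|) / 2 := by
    split_ifs <;> linarith [le_abs_self (g x - f x), neg_abs_le (g x - f x)]
  calc ∑ x, (if A x then g x - f x else 0) ≤ ∑ x, (g x - f x + |g x - f x|) / 2 :=
        sum_le_sum fun x _ => hpt x
    _ = (∑ x, |g x - f x|) / 2 := by
        rw [← sum_div, sum_add_distrib, sum_sub_distrib, h, sub_self, zero_add]

lemma sum_ite_le_sum_ite_add_sqrt (hf : f ∈ stdSimplex ℝ X) (hg : g ∈ stdSimplex ℝ X)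
    (A : X → Prop) [DecidablePred A] :
    ∑ x, (if A x then g x else 0) ≤
      ∑ x, (if A x then f x else 0) + √(2 * (1 - bhattacharyya f g)) := by
  have hb0 := bhattacharyya_nonneg (f := f) (g := g)
  have hb1 := bhattacharyya_le_one hf hg
  have htv : (∑ x, |g x - f x|) / 2 ≤ √(2 * (1 - bhattacharyya f g)) := by
    refine Real.le_sqrt_of_sq_le ?_
    nlinarith [sq_sum_abs_sub_le hf hg]
  have hsplit : ∑ x, (if A x then g x else 0) =
      ∑ x, (if A x then f x else 0) + ∑ x, (if A x then g x - f x else 0) := by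
    rw [← sum_add_distrib]
    exact sum_congr rfl fun x _ => by split_ifs <;> ring
  linarith [sum_ite_sub_le_half_sum_abs (hf.2.trans hg.2.symm) A]

lemma one_sub_bhattacharyya_le {m : ℝ} (hm : 0 < m) (hfm : ∀ x, m ≤ f x)
    (hf : f ∈ stdSimplex ℝ X) (hg : g ∈ stdSimplex ℝ X) :
    1 - bhattacharyya f g ≤ (∑ x, (f x - g x) ^ 2) / (2 * m) := by
  have hpt x : m * (√(f x) - √(g x)) ^ 2 ≤ (f x - g x) ^ 2 := by
    have hm' : m ≤ (√(f x) + √(g x)) ^ 2 :=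
      calc m ≤ f x := hfm x
        _ = √(f x) ^ 2 := (Real.sq_sqrt (hf.1 x)).symm
        _ ≤ (√(f x) + √(g x)) ^ 2 := by gcongr; exact le_add_of_nonneg_right (Real.sqrt_nonneg _)
    rw [sub_eq_sqrt_sub_sqrt_mul_add (hf.1 x) (hg.1 x), mul_pow, mul_comm m]
    exact mul_le_mul_of_nonneg_left hm' (sq_nonneg _)
  rw [le_div_iff₀ (by positivity)]
  have := sum_le_sum fun x (_ : x ∈ univ) => hpt x
  rw [← mul_sum, sum_sq_sqrt_sub_sqrt hf hg] at this
  linarith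

variable {k : ℕ}

lemma pi_mem_stdSimplex (hf : f ∈ stdSimplex ℝ X) :
    (fun ω : Fin k → X => ∏ i, f (ω i)) ∈ stdSimplex ℝ (Fin k → X) :=
  ⟨fun _ => prod_nonneg fun i _ => hf.1 _, by rw [← Fintype.sum_pow, hf.2, one_pow]⟩

lemma bhattacharyya_pi (hf : ∀ x, 0 ≤ f x) (hg : ∀ x, 0 ≤ g x) :
    bhattacharyya (fun ω : Fin k → X => ∏ i, f (ω i)) (fun ω => ∏ i, g (ω i)) =
      bhattacharyya f g ^ k := by
  simp only [bhattacharyya, Fintype.sum_pow, ← prod_mul_distrib]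
  exact sum_congr rfl fun ω _ => Real.sqrt_prod _ fun i _ => mul_nonneg (hf _) (hg _)

lemma one_sub_bhattacharyya_pi_le (hf : ∀ x, 0 ≤ f x) (hg : ∀ x, 0 ≤ g x) :
    1 - bhattacharyya (fun ω : Fin k → X => ∏ i, f (ω i)) (fun ω => ∏ i, g (ω i)) ≤
      k * (1 - bhattacharyya f g) := by
  have hb := bhattacharyya_nonneg (f := f) (g := g)
  have hBernoulli := one_add_mul_le_pow (a := bhattacharyya f g - 1) (by linarith) k
  rw [add_sub_cancel] at hBernoulli
  rw [bhattacharyya_pi hf hg]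
  linarith

end Bhattacharyya

section CFN

variable {θ η : ℝ}

lemma sum_fin_four_bool (f : (Fin 4 → Bool) → ℝ) :
    ∑ s, f s = ∑ a : Bool, ∑ b : Bool, ∑ c : Bool, ∑ d : Bool, f ![a, b, c, d] := by
  simp only [← (Fin.consEquiv fun _ => Bool).sum_comp, Fintype.sum_prod_type, Fintype.sum_unique,
    Subsingleton.elim default ![]]
  rfl

lemma cfnM_nonneg (hη : |η| ≤ 1) (a b : Bool) : 0 ≤ cfnM η a b := by
  have := abs_le.1 hη
  unfold cfnM; split <;> linarith

lemma cfnQuartet_mem_stdSimplex (t : QuartetTopology) (hθ : |θ| ≤ 1) (hη : |η| ≤ 1) :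
    cfnQuartet t θ η ∈ stdSimplex ℝ (Fin 4 → Bool) := by
  have hMθ := cfnM_nonneg hθ
  have hMη := cfnM_nonneg hη
  refine ⟨fun s => ?_, ?_⟩
  · cases t <;> exact Finset.sum_nonneg fun u _ => Finset.sum_nonneg fun v _ => by
      apply_rules [mul_nonneg, hMθ, hMη] <;> norm_num
  · rw [sum_fin_four_bool]
    cases t <;>
    · simp only [cfnQuartet, cfnM, Fintype.sum_bool, Matrix.cons_val_zero, Matrix.cons_val_one,
        Matrix.cons_val_two, Matrix.cons_val_three, Matrix.head_cons, Matrix.tail_cons,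
        Bool.true_eq_false, Bool.false_eq_true, reduceIte]
      ring

lemma sum_sq_cfnQuartet_sub (t : QuartetTopology) (ht : t ≠ .t12_34) :
    ∑ s, (cfnQuartet .t12_34 θ η s - cfnQuartet t θ η s) ^ 2 = (η ^ 2 * (1 - θ)) ^ 2 / 4 := by
  rw [sum_fin_four_bool]
  cases t
  · exact absurd rfl ht
  all_goals
    simp only [cfnQuartet, cfnM, Fintype.sum_bool, Matrix.cons_val_zero, Matrix.cons_val_one,
      Matrix.cons_val_two, Matrix.cons_val_three, Matrix.head_cons, Matrix.tail_cons,
      Bool.true_eq_false, Bool.false_eq_true, reduceIte]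
    ring

lemma cfnM_true_mul_cfnM_false (η : ℝ) (b : Bool) :
    cfnM η true b * cfnM η false b = (1 - η ^ 2) / 4 := by
  cases b <;> simp only [cfnM, Bool.true_eq_false, Bool.false_eq_true, reduceIte] <;> ring

lemma le_cfnQuartet_t12_34 (hθ0 : 0 ≤ θ) (hθ1 : θ ≤ 1) (hη : |η| ≤ 1) (s : Fin 4 → Bool) :
    (1 - η ^ 2) ^ 2 / 32 ≤ cfnQuartet .t12_34 θ η s := by
  have hθ : |θ| ≤ 1 := abs_le.2 ⟨by linarith, hθ1⟩
  set a : Bool → ℝ := fun u => cfnM η u (s 0) * cfnM η u (s 1) with ha_def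
  set b : Bool → ℝ := fun v => cfnM η v (s 2) * cfnM η v (s 3) with hb_def
  have ha : ∀ u, 0 ≤ a u := fun u => mul_nonneg (cfnM_nonneg hη _ _) (cfnM_nonneg hη _ _)
  have hb : ∀ v, 0 ≤ b v := fun v => mul_nonneg (cfnM_nonneg hη _ _) (cfnM_nonneg hη _ _)
  -- Keep only the terms with `u = v`: their product `hprod` does not depend on `s`, so AM-GM
  -- bounds their sum.
  have hdiag : (a true * b true + a false * b false) / 4 ≤ cfnQuartet .t12_34 θ η s := by
    have h₁ := mul_nonneg (cfnM_nonneg hθ true false) (mul_nonneg (ha true) (hb false))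
    have h₂ := mul_nonneg (cfnM_nonneg hθ false true) (mul_nonneg (ha false) (hb true))
    have h₃ := mul_nonneg hθ0 (mul_nonneg (ha true) (hb true))
    have h₄ := mul_nonneg hθ0 (mul_nonneg (ha false) (hb false))
    have hTT : cfnM θ true true = (1 + θ) / 2 := if_pos rfl
    have hFF : cfnM θ false false = (1 + θ) / 2 := if_pos rfl
    simp only [cfnQuartet, Fintype.sum_bool, hTT, hFF, ha_def, hb_def] at h₁ h₂ h₃ h₄ ⊢
    linarith
  have hprod : (a true * b true) * (a false * b false) = ((1 - η ^ 2) / 4) ^ 4 := by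
    calc (a true * b true) * (a false * b false)
        = ∏ i : Fin 4, cfnM η true (s i) * cfnM η false (s i) := by
          simp only [ha_def, hb_def, Fin.prod_univ_four]; ring
      _ = _ := by simp only [cfnM_true_mul_cfnM_false, Finset.prod_const, Finset.card_univ,
          Fintype.card_fin]
  nlinarith [sq_nonneg (a true * b true - a false * b false), mul_nonneg (ha true) (hb true),
    mul_nonneg (ha false) (hb false), sq_nonneg (1 - η ^ 2)]

lemma one_sub_bhattacharyya_cfnQuartet_le (hθ0 : 0 ≤ θ) (hθ1 : θ ≤ 1) (hη : |η| < 1)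
    {t : QuartetTopology} (ht : t ≠ .t12_34) :
    1 - bhattacharyya (cfnQuartet .t12_34 θ η) (cfnQuartet t θ η) ≤
      4 * (η ^ 2 * (1 - θ)) ^ 2 / (1 - η ^ 2) ^ 2 := by
  have hθ : |θ| ≤ 1 := abs_le.2 ⟨by linarith, hθ1⟩
  have hη2 : 0 < 1 - η ^ 2 := by nlinarith [sq_abs η, abs_nonneg η]
  refine (one_sub_bhattacharyya_le (by positivity) (le_cfnQuartet_t12_34 hθ0 hθ1 hη.le)
    (cfnQuartet_mem_stdSimplex _ hθ hη.le) (cfnQuartet_mem_stdSimplex t hθ hη.le)).trans_eq ?_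
  rw [sum_sq_cfnQuartet_sub t ht]
  field_simp
  ring

lemma mul_rpow_mul_one_sub_le {q : ℝ} (hθ : 0 < θ) (hq : 1 ≤ q) :
    q * θ ^ q * (1 - θ) ≤ 1 - θ ^ q := by
  have hpos : 0 < θ ^ q := Real.rpow_pos_of_pos hθ q
  -- Bernoulli's inequality for the base `θ⁻¹`
  have hB := one_add_mul_self_le_rpow_one_add (s := θ⁻¹ - 1) (by linarith [inv_pos.2 hθ]) hq
  rw [add_sub_cancel, Real.inv_rpow hθ.le] at hB
  have hB' : θ ^ q * (1 + q * (θ⁻¹ - 1)) ≤ 1 := by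
    have := mul_le_mul_of_nonneg_left hB hpos.le
    rwa [mul_inv_cancel₀ hpos.ne'] at this
  have hinv : 1 - θ ≤ θ⁻¹ - 1 := by
    rw [inv_eq_one_div, le_sub_iff_add_le, le_div_iff₀ hθ]
    nlinarith [sq_nonneg (1 - θ)]
  nlinarith [mul_le_mul_of_nonneg_left hinv (by positivity : 0 ≤ q * θ ^ q)]

lemma one_sub_bhattacharyya_cfnQuartet_rpow_le {p : ℝ} (hθ0 : 0 < θ) (hθ1 : θ < 1)
    (hp : 1 / 2 ≤ p) {t : QuartetTopology} (ht : t ≠ .t12_34) :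
    1 - bhattacharyya (cfnQuartet .t12_34 θ (θ ^ p)) (cfnQuartet t θ (θ ^ p)) ≤ 1 / p ^ 2 := by
  have hη0 : 0 < θ ^ p := Real.rpow_pos_of_pos hθ0 p
  have hη1 : θ ^ p < 1 := Real.rpow_lt_one hθ0.le hθ1 (by linarith)
  have hη2 : 0 < 1 - (θ ^ p) ^ 2 := by nlinarith
  have key : 2 * p * (θ ^ p) ^ 2 * (1 - θ) ≤ 1 - (θ ^ p) ^ 2 := by
    have := mul_rpow_mul_one_sub_le hθ0 (q := p * 2) (by linarith)
    rw [Real.rpow_mul hθ0.le, Real.rpow_two] at this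
    linarith
  refine (one_sub_bhattacharyya_cfnQuartet_le hθ0.le hθ1.le
    (by rwa [abs_of_pos hη0]) ht).trans ?_
  rw [div_le_div_iff₀ (by positivity) (by positivity)]
  calc 4 * ((θ ^ p) ^ 2 * (1 - θ)) ^ 2 * p ^ 2 = (2 * p * (θ ^ p) ^ 2 * (1 - θ)) ^ 2 := by ring
    _ ≤ (1 - (θ ^ p) ^ 2) ^ 2 := pow_le_pow_left₀ (mul_nonneg (by positivity) (by linarith)) key 2
    _ = 1 * (1 - (θ ^ p) ^ 2) ^ 2 := (one_mul _).symm

end CFN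

lemma sum_fiberwise_quartetTopology {Y : Type*} [Fintype Y] (M : Y → QuartetTopology) (F : Y → ℝ) :
    (∑ y, if M y = .t12_34 then F y else 0) + (∑ y, if M y = .t13_24 then F y else 0) +
      (∑ y, if M y = .t14_23 then F y else 0) = ∑ y, F y := by
  simp only [← Finset.sum_add_distrib]
  exact Finset.sum_congr rfl fun y _ => by cases M y <;> simp

theorem cfn_sequence_length_lower_bound_general
    (p : ℝ) (hp : 1 < p) (ε : ℝ) (hε : ε ∈ Set.Ioo (0 : ℝ) (2 / 3))
    (k : ℕ) (θ : ℝ) (hθ : θ ∈ Set.Ioo (0 : ℝ) 1)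
    (M : (Fin k → (Fin 4 → Bool)) → QuartetTopology)
    (hM : ∀ t : QuartetTopology,
      1 - ε ≤ ∑ ω : Fin k → Fin 4 → Bool,
        (if M ω = t then ∏ i : Fin k, cfnQuartet t θ (θ ^ p) (ω i) else 0)) :
    (k : ℝ) ≥ (1 / 2) * (1 - (3 / 2) * ε) ^ 2 * p ^ 2 := by
  obtain ⟨hθ0, hθ1⟩ := hθ
  have hθ : |θ| ≤ 1 := abs_le.2 ⟨by linarith, hθ1.le⟩
  have hη : |θ ^ p| ≤ 1 := by
    rw [abs_of_pos (Real.rpow_pos_of_pos hθ0 p)]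
    exact Real.rpow_le_one hθ0.le hθ1.le (by linarith)
  have hP := cfnQuartet_mem_stdSimplex .t12_34 hθ hη
  have hwrong : ∀ t ≠ .t12_34, 1 - ε ≤ (∑ ω : Fin k → Fin 4 → Bool,
      if M ω = t then ∏ i, cfnQuartet .t12_34 θ (θ ^ p) (ω i) else 0) + √(2 * k / p ^ 2) := by
    intro t ht
    have hQ := cfnQuartet_mem_stdSimplex t hθ hη
    refine (hM t).trans <| (sum_ite_le_sum_ite_add_sqrt (pi_mem_stdSimplex hP)
      (pi_mem_stdSimplex hQ) _).trans <| add_le_add_right (Real.sqrt_le_sqrt ?_) _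
    calc 2 * (1 - bhattacharyya _ _)
        ≤ 2 * (k * (1 - bhattacharyya (cfnQuartet .t12_34 θ (θ ^ p)) (cfnQuartet t θ (θ ^ p)))) :=
          by gcongr; exact one_sub_bhattacharyya_pi_le hP.1 hQ.1
      _ ≤ 2 * (k * (1 / p ^ 2)) := by
          gcongr; exact one_sub_bhattacharyya_cfnQuartet_rpow_le hθ0 hθ1 (by linarith) ht
      _ = 2 * k / p ^ 2 := by ring
  have hpart := sum_fiberwise_quartetTopology M fun ω => ∏ i, cfnQuartet .t12_34 θ (θ ^ p) (ω i)
  rw [(pi_mem_stdSimplex hP).2] at hpart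
  have hroot : 1 - 3 / 2 * ε ≤ √(2 * k / p ^ 2) := by
    linarith [hM .t12_34, hwrong .t13_24 (by decide), hwrong .t14_23 (by decide)]
  have hsq := (Real.le_sqrt (by linarith [hε.2]) (by positivity)).1 hroot
  rw [le_div_iff₀ (by positivity)] at hsq
  linarith

/-- **Theorem 1 of the paper.** If `k` sites evolve i.i.d. under the symmetric two-state
(CFN) model on a four-taxon tree with interior edge parameter `θ` and terminal edge
parameters `θ ^ p` (i.e. interior branch length `x`, terminal branch lengths `p·x`, with
`θ = e^{-2x}`), then any method that reconstructs each of the three topologies correctly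
with probability at least `1 - ε` requires `k ≥ (1/2)·(1 - (3/2)ε)²·p²`. -/
theorem cfn_sequence_length_lower_bound
    (p : ℝ) (hp : 1 < p) (ε : ℝ) (hε : ε ∈ Set.Ioo (0 : ℝ) (2 / 3))
    (k : ℕ) (hk : 0 < k) (θ : ℝ) (hθ : θ ∈ Set.Ioo (0 : ℝ) 1)
    (M : (Fin k → (Fin 4 → Bool)) → QuartetTopology)
    (hM : ∀ t : QuartetTopology,
      1 - ε ≤ ∑ ω : Fin k → Fin 4 → Bool,
        (if M ω = t then ∏ i : Fin k, cfnQuartet t θ (θ ^ p) (ω i) else 0)) :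
    (k : ℝ) ≥ (1 / 2) * (1 - (3 / 2) * ε) ^ 2 * p ^ 2 :=
  cfn_sequence_length_lower_bound_general p hp ε hε k θ hθ M hM
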